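/- arXiv:1301.0164 — 10 statements merged into one kernel-verified Lean document; each statement's English description precedes it below -/
import Mathlib

section
/- Let Q and P be pure unit quaternions with Re(P·Q) = 0 (P orthogonal to Q). Then for every t : ℝ one has e^{tQ} · P · e^{-tQ} = cos(2t) • P + sin(2t) • (Q·P). (This expresses that conjugation by e^{tQ} acts on the 2-sphere of pure unit quaternions as the rotation of angle 2t about the axis through Q.) -/
/-! Orthogonality of the pure quaternions `P` and `Q` means they anticommute, so
`e^{tQ} P = P e^{-tQ}`. Hence `e^{tQ} P e^{-tQ} = e^{tQ} e^{tQ} P`, and since `Q² = -1` the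
exponential law gives `e^{tQ} e^{tQ} = e^{2tQ}`. -/

open Quaternion

noncomputable section

def qi : ℍ[ℝ] := ⟨0, 1, 0, 0⟩

def qj : ℍ[ℝ] := ⟨0, 0, 1, 0⟩

def qk : ℍ[ℝ] := ⟨0, 0, 0, 1⟩

def expQ (t : ℝ) (Q : ℍ[ℝ]) : ℍ[ℝ] := ((Real.cos t : ℝ) : ℍ[ℝ]) + (Real.sin t) • Q

theorem Quaternion.mul_self_eq_neg_one_of_re_eq_zero_of_norm_eq_one {Q : ℍ[ℝ]}
    (hQre : Q.re = 0) (hQnorm : ‖Q‖ = 1) : Q * Q = -1 := by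
  have hstar : star Q = -Q := Quaternion.star_eq_neg.mpr hQre
  have h := Quaternion.self_mul_star Q
  rw [hstar, Quaternion.normSq_eq_norm_mul_self, hQnorm, mul_neg] at h
  simpa using congrArg Neg.neg h

theorem Quaternion.mul_add_mul_swap_of_re_eq_zero {R : Type*} [CommRing R] {a b : ℍ[R]}
    (ha : a.re = 0) (hb : b.re = 0) : a * b + b * a = 2 * ((a * b).re : ℍ[R]) := by
  have star_of_re_eq_zero {x : ℍ[R]} (hx : x.re = 0) : star x = -x := by ext <;> simp [hx]
  have hstar : star (a * b) = b * a := by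
    rw [star_mul, star_of_re_eq_zero ha, star_of_re_eq_zero hb, neg_mul_neg]
  rw [← hstar, Quaternion.self_add_star]

theorem Quaternion.mul_swap_eq_neg_of_re_mul_eq_zero {R : Type*} [CommRing R] {a b : ℍ[R]}
    (ha : a.re = 0) (hb : b.re = 0) (hab : (a * b).re = 0) : b * a = -(a * b) := by
  have h := Quaternion.mul_add_mul_swap_of_re_eq_zero ha hb
  rw [hab, Quaternion.coe_zero, mul_zero] at h
  exact eq_neg_of_add_eq_zero_right h

theorem expQ_mul (t : ℝ) (Q P : ℍ[ℝ]) :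
    expQ t Q * P = Real.cos t • P + Real.sin t • (Q * P) := by
  rw [expQ, add_mul, Quaternion.coe_mul_eq_smul, smul_mul_assoc]

theorem expQ_add {Q : ℍ[ℝ]} (hQ : Q * Q = -1) (s t : ℝ) :
    expQ (s + t) Q = expQ s Q * expQ t Q := by
  simp only [expQ, Real.cos_add, Real.sin_add, ← Quaternion.algebraMap_def,
    Algebra.algebraMap_eq_smul_one, add_mul, mul_add, smul_mul_smul_comm, one_mul, mul_one, hQ]
  module

theorem expQ_mul_eq_mul_expQ_neg {Q P : ℍ[ℝ]} (hQP : Q * P = -(P * Q)) (t : ℝ) :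
    expQ t Q * P = P * expQ (-t) Q := by
  simp only [expQ, Real.cos_neg, Real.sin_neg, ← Quaternion.algebraMap_def,
    Algebra.algebraMap_eq_smul_one, add_mul, mul_add, smul_mul_assoc, mul_smul_comm, one_mul,
    mul_one, hQP]
  module

theorem rotation_of_conjugation_general (Q P : ℍ[ℝ])
    (hQnorm : ‖Q‖ = 1) (hQre : Q.re = 0)
    (hPre : P.re = 0)
    (hperp : (P * Q).re = 0) :
    ∀ t : ℝ, expQ t Q * P * expQ (-t) Q
      = Real.cos (2 * t) • P + Real.sin (2 * t) • (Q * P) := by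
  intro t
  have hQQ : Q * Q = -1 := Quaternion.mul_self_eq_neg_one_of_re_eq_zero_of_norm_eq_one hQre hQnorm
  have hQP : Q * P = -(P * Q) := Quaternion.mul_swap_eq_neg_of_re_mul_eq_zero hPre hQre hperp
  calc expQ t Q * P * expQ (-t) Q = expQ t Q * (expQ t Q * P) := by
        rw [mul_assoc, expQ_mul_eq_mul_expQ_neg hQP]
    _ = expQ (2 * t) Q * P := by rw [two_mul, expQ_add hQQ, mul_assoc]
    _ = Real.cos (2 * t) • P + Real.sin (2 * t) • (Q * P) := expQ_mul _ _ _

/-- Conjugation by `e^{tQ}` rotates the 2-sphere of pure unit quaternions by angle `2t`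
about the axis through `Q`: for `P` a pure unit quaternion orthogonal to `Q`,
`e^{tQ} P e^{-tQ} = cos(2t) • P + sin(2t) • (QP)`. -/
theorem rotation_of_conjugation (Q P : ℍ[ℝ])
    (hQnorm : ‖Q‖ = 1) (hQre : Q.re = 0)
    (hPnorm : ‖P‖ = 1) (hPre : P.re = 0)
    (hperp : (P * Q).re = 0) :
    ∀ t : ℝ, expQ t Q * P * expQ (-t) Q
      = Real.cos (2 * t) • P + Real.sin (2 * t) • (Q * P) :=
  rotation_of_conjugation_general Q P hQnorm hQre hPre hperp
end
end

section
/- Let q be a unit quaternion and Q a pure unit quaternion such that q·Q·q⁻¹ = -Q. Then q is itself a pure unit quaternion (Re q = 0), and q is perpendicular to Q, i.e. Re(q·Q) = 0. -/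
/-! For a pure quaternion `Q` one has `q Q + Q q = 2 (Re q • Q + Re (q Q))`, a vector part plus a
scalar part. The hypothesis says exactly that `q` anticommutes with `Q`, so both parts vanish,
and `Q ≠ 0` turns `Re q • Q = 0` into `Re q = 0`. -/

open Quaternion

noncomputable section

section

variable {R : Type*}

theorem Quaternion.mul_add_mul_eq_of_re_eq_zero [CommRing R] {Q : ℍ[R]} (hQ : Q.re = 0)
    (q : ℍ[R]) :
    q * Q + Q * q = (2 : R) • (q.re • Q + ((q * Q).re : ℍ[R])) := by
  ext <;> simp [hQ] <;> ring

theorem Quaternion.mul_add_mul_eq_zero_iff_of_re_eq_zero [Field R] [NeZero (2 : R)] {Q : ℍ[R]}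
    (hQ : Q.re = 0) (hQ0 : Q ≠ 0) (q : ℍ[R]) :
    q * Q + Q * q = 0 ↔ q.re = 0 ∧ (q * Q).re = 0 := by
  rw [mul_add_mul_eq_of_re_eq_zero hQ, smul_eq_zero, or_iff_right two_ne_zero]
  constructor
  · intro h
    have hre : (q * Q).re = 0 := by simpa [hQ] using congrArg (·.re) h
    rw [hre, Quaternion.coe_zero, add_zero, smul_eq_zero, or_iff_left hQ0] at h
    exact ⟨h, hre⟩
  · rintro ⟨hq, hqQ⟩
    simp [hq, hqQ]

end

theorem mul_eq_neg_mul_of_mul_mul_inv_eq_neg {α : Type*} [DivisionRing α] {q Q : α}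
    (hQ : Q ≠ 0) (h : q * Q * q⁻¹ = -Q) : q * Q = -(Q * q) := by
  have hq : q ≠ 0 := by
    rintro rfl
    simp [eq_comm, hQ] at h
  rw [← neg_mul, ← h, inv_mul_cancel_right₀ hq]

theorem pure_and_perp_of_conj_neg_general (q Q : ℍ[ℝ])
    (hQnorm : ‖Q‖ = 1) (hQre : Q.re = 0)
    (hconj : q * Q * q⁻¹ = -Q) :
    q.re = 0 ∧ (q * Q).re = 0 := by
  have hQ0 : Q ≠ 0 := ne_zero_of_norm_ne_zero (by simp [hQnorm])
  rw [← mul_add_mul_eq_zero_iff_of_re_eq_zero hQre hQ0,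
    mul_eq_neg_mul_of_mul_mul_inv_eq_neg hQ0 hconj, neg_add_cancel]

/-- If a unit quaternion `q` conjugates the pure unit quaternion `Q` to `-Q`, then `q`
is itself a pure unit quaternion and `q` is perpendicular to `Q`. -/
theorem pure_and_perp_of_conj_neg (q Q : ℍ[ℝ])
    (hqnorm : ‖q‖ = 1) (hQnorm : ‖Q‖ = 1) (hQre : Q.re = 0)
    (hconj : q * Q * q⁻¹ = -Q) :
    q.re = 0 ∧ (q * Q).re = 0 :=
  pure_and_perp_of_conj_neg_general q Q hQnorm hQre hconj
end
end

section
/- Let Q₁, Q₂ be pure unit quaternions and t, s : ℝ. If e^{tQ₁} and e^{sQ₂} commute, e^{tQ₁} ∉ {1, -1}, and e^{sQ₂} ∉ {1, -1}, then Q₁ = Q₂ or Q₁ = -Q₂. -/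
/-!
Since the real parts `cos t`, `cos s` are central, `e^{tQ₁}` and `e^{sQ₂}` commute exactly when
`(sin t) • Q₁` and `(sin s) • Q₂` do; and `sin t ≠ 0` because otherwise `e^{tQ₁} = cos t = ±1`.
So `Q₁` and `Q₂` commute, and as both square to `-1`, `(Q₁ - Q₂)(Q₁ + Q₂) = Q₁² - Q₂² = 0`;
`ℍ` has no zero divisors.
-/

open Quaternion

noncomputable section

theorem Quaternion.sq_eq_neg_one_of_re_eq_zero {Q : ℍ[ℝ]} (hnorm : ‖Q‖ = 1) (hre : Q.re = 0) :
    Q ^ 2 = -1 := by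
  rw [Quaternion.sq_eq_neg_normSq.mpr hre, normSq_eq_norm_mul_self, hnorm, mul_one, coe_one]

theorem sin_ne_zero_of_expQ_ne {t : ℝ} {Q : ℍ[ℝ]} (h : expQ t Q ≠ 1) (h' : expQ t Q ≠ -1) :
    Real.sin t ≠ 0 := by
  intro hsin
  rcases Real.sin_eq_zero_iff_cos_eq.mp hsin with hcos | hcos
  · exact h (by simp [expQ, hsin, hcos])
  · exact h' (by simp [expQ, hsin, hcos])

theorem Commute.of_expQ {t s : ℝ} {Q₁ Q₂ : ℍ[ℝ]} (hcomm : Commute (expQ t Q₁) (expQ s Q₂))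
    (ht : Real.sin t ≠ 0) (hs : Real.sin s ≠ 0) : Commute Q₁ Q₂ := by
  have hsin : Commute (Real.sin t • Q₁) (Real.sin s • Q₂) := by
    have h := (hcomm.sub_right (coe_commute (Real.cos s) _).symm).sub_left
      (coe_commute (Real.cos t) _)
    simpa only [expQ, add_sub_cancel_left] using h
  rwa [Commute.smul_left_iff₀ ht, Commute.smul_right_iff₀ hs] at hsin

/-- If `e^{tQ₁}` and `e^{sQ₂}` commute and neither equals `1` or `-1`, where `Q₁, Q₂`
are pure unit quaternions, then `Q₁ = ± Q₂`. -/
theorem axes_eq_of_commute (Q₁ Q₂ : ℍ[ℝ]) (t s : ℝ)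
    (hQ₁norm : ‖Q₁‖ = 1) (hQ₁re : Q₁.re = 0)
    (hQ₂norm : ‖Q₂‖ = 1) (hQ₂re : Q₂.re = 0)
    (hcomm : expQ t Q₁ * expQ s Q₂ = expQ s Q₂ * expQ t Q₁)
    (h₁ : expQ t Q₁ ≠ 1) (h₁' : expQ t Q₁ ≠ -1)
    (h₂ : expQ s Q₂ ≠ 1) (h₂' : expQ s Q₂ ≠ -1) :
    Q₁ = Q₂ ∨ Q₁ = -Q₂ := by
  have hQ : Commute Q₁ Q₂ :=
    Commute.of_expQ hcomm (sin_ne_zero_of_expQ_ne h₁ h₁') (sin_ne_zero_of_expQ_ne h₂ h₂')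
  rw [← hQ.sq_eq_sq_iff_eq_or_eq_neg, Quaternion.sq_eq_neg_one_of_re_eq_zero hQ₁norm hQ₁re,
    Quaternion.sq_eq_neg_one_of_re_eq_zero hQ₂norm hQ₂re]
end
end

section
/- Let A, B, C, D be pure unit quaternions satisfying B·A = C·D. Then there exist a unit quaternion g and real numbers γ, θ such that g·A·g⁻¹ = i, g·B·g⁻¹ = e^{γk}·i, g·C·g⁻¹ = e^{θk}·i, and g·D·g⁻¹ = e^{(θ−γ)k}·i. (This is the surjectivity of the map ψ : ℝ² → R(S², {a,b,c,d}) onto the traceless character variety of the four-punctured sphere, whose fundamental group is ⟨a,b,c,d | ba = cd⟩.) -/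
open Quaternion

noncomputable section

/-!
Conjugating by `i + A` moves `A` to `i`, since `(i + A) A = i (i + A)` whenever
`A² = i² = -1`; if `A = -i`, conjugate by `k` instead. Then `D = -C B i`, so `Re D = 0` says
that `i`, `B`, `C` are coplanar. If `x j + y k` is the `(j, k)`-part of `B` (or of `C`) and
`r = √(x² + y²)`, conjugation by `(r + x) - y i`, whose argument is half the angle from
`x j + y k` to `r j`, is the rotation about `i` taking the first to the second; it moves the
plane to `span {i, j}`, whose pure unit quaternions are the `e^{tk} i`. Finally `B i = C D`
determines `D`.
-/

theorem conj_mul_conj₀ {G₀ : Type*} [GroupWithZero G₀] {g : G₀} (hg : g ≠ 0) (a b : G₀) :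
    g * a * g⁻¹ * (g * b * g⁻¹) = g * (a * b) * g⁻¹ := by
  simp only [mul_assoc, inv_mul_cancel_left₀ hg]

theorem conj_mul_eq_conj_conj {α : Type*} [DivisionMonoid α] (u g a : α) :
    u * g * a * (u * g)⁻¹ = u * (g * a * g⁻¹) * u⁻¹ := by
  simp only [mul_inv_rev, mul_assoc]

theorem add_mul_eq_mul_add_of_mul_self_eq {R : Type*} [NonUnitalNonAssocSemiring R] {p q : R}
    (h : p * p = q * q) : (q + p) * p = q * (q + p) := by
  rw [add_mul, mul_add, h, add_comm]

namespace Quaternion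

theorem re_mul_comm {R : Type*} [CommRing R] (a b : ℍ[R]) : (a * b).re = (b * a).re := by
  simp only [re_mul]
  ring

theorem re_conj {R : Type*} [Field R] [LinearOrder R] [IsStrictOrderedRing R] {g : ℍ[R]}
    (hg : g ≠ 0) (a : ℍ[R]) : (g * a * g⁻¹).re = a.re := by
  rw [re_mul_comm, ← mul_assoc, inv_mul_cancel₀ hg, one_mul]

theorem norm_conj {g : ℍ[ℝ]} (hg : g ≠ 0) (a : ℍ[ℝ]) : ‖g * a * g⁻¹‖ = ‖a‖ := by
  rw [norm_mul, norm_mul, norm_inv, mul_right_comm, mul_inv_cancel₀ (norm_ne_zero_iff.2 hg),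
    one_mul]

theorem mul_self_eq_neg_one {a : ℍ[ℝ]} (hn : ‖a‖ = 1) (hre : a.re = 0) : a * a = -1 := by
  rw [← neg_neg (a * a), ← neg_mul, ← star_eq_neg.2 hre, star_mul_self, normSq_eq_norm_mul_self,
    hn, mul_one, coe_one]

theorem exists_norm_eq_one_conj_eq {g : ℍ[ℝ]} (hg : g ≠ 0) :
    ∃ u : ℍ[ℝ], ‖u‖ = 1 ∧ ∀ a, u * a * u⁻¹ = g * a * g⁻¹ := by
  have hn : ‖g‖ ≠ 0 := norm_ne_zero_iff.2 hg
  refine ⟨‖g‖⁻¹ • g, by rw [norm_smul, norm_inv, norm_norm, inv_mul_cancel₀ hn], fun a => ?_⟩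
  rw [smul_inv₀, smul_mul_assoc, smul_mul_assoc, mul_smul_comm, smul_smul, inv_inv,
    inv_mul_cancel₀ hn, one_smul]

theorem exists_conj_eq_of_mul_self_eq {a b : ℍ[ℝ]} (h : a * a = b * b) (hab : a ≠ -b) :
    ∃ g : ℍ[ℝ], ‖g‖ = 1 ∧ g * a * g⁻¹ = b := by
  have hg : b + a ≠ 0 := fun h0 => hab (eq_neg_of_add_eq_zero_right h0)
  obtain ⟨u, hu, hconj⟩ := exists_norm_eq_one_conj_eq hg
  exact ⟨u, hu, by rw [hconj, mul_inv_eq_iff_eq_mul₀ hg, add_mul_eq_mul_add_of_mul_self_eq h]⟩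

end Quaternion

@[simp] theorem qi_re : qi.re = 0 := rfl
@[simp] theorem qi_imI : qi.imI = 1 := rfl
@[simp] theorem qi_imJ : qi.imJ = 0 := rfl
@[simp] theorem qi_imK : qi.imK = 0 := rfl
@[simp] theorem qk_re : qk.re = 0 := rfl
@[simp] theorem qk_imI : qk.imI = 0 := rfl
@[simp] theorem qk_imJ : qk.imJ = 0 := rfl
@[simp] theorem qk_imK : qk.imK = 1 := rfl

theorem qi_mul_qi : qi * qi = -1 := by
  ext <;> simp [re_mul, imI_mul, imJ_mul, imK_mul]

theorem qk_mul_neg_qi : qk * -qi = qi * qk := by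
  ext <;> simp [re_mul, imI_mul, imJ_mul, imK_mul]

theorem exists_conj_eq_qi {a : ℍ[ℝ]} (hn : ‖a‖ = 1) (hre : a.re = 0) :
    ∃ g : ℍ[ℝ], ‖g‖ = 1 ∧ g * a * g⁻¹ = qi := by
  by_cases ha : a = -qi
  · have hk : qk ≠ 0 := fun h => by simpa using congrArg (·.imK) h
    obtain ⟨u, hu, hconj⟩ := exists_norm_eq_one_conj_eq hk
    exact ⟨u, hu, by rw [hconj, mul_inv_eq_iff_eq_mul₀ hk, ha, qk_mul_neg_qi]⟩
  · exact exists_conj_eq_of_mul_self_eq (by rw [mul_self_eq_neg_one hn hre, qi_mul_qi]) ha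

theorem imJ_mul_imK_eq_of_mul_qi_eq {b c d : ℍ[ℝ]} (hb : b.re = 0) (hc : c.re = 0)
    (hcc : c * c = -1) (hd : d.re = 0) (h : b * qi = c * d) :
    b.imJ * c.imK = b.imK * c.imJ := by
  have hd' : d = -(c * (b * qi)) := by rw [h, ← mul_assoc, hcc, neg_one_mul, neg_neg]
  rw [hd'] at hd
  simp only [re_neg, re_mul, imI_mul, imJ_mul, imK_mul, hb, hc, qi_re, qi_imI, qi_imJ,
    qi_imK] at hd
  linear_combination -hd

theorem imK_rotor_conj {x y r : ℝ} (hr : r ^ 2 = x ^ 2 + y ^ 2) {q : ℍ[ℝ]}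
    (hq : x * q.imK = y * q.imJ) :
    (((r + x : ℝ) - y • qi) * q * ((r + x : ℝ) - y • qi)⁻¹ : ℍ[ℝ]).imK = 0 := by
  rw [inv_def, mul_smul_comm, imK_smul, smul_eq_mul]
  apply mul_eq_zero_of_right
  simp only [coe_add, star_sub, star_add, star_coe, Quaternion.star_smul, re_mul, imI_mul, imJ_mul,
    imK_mul, re_sub, re_add, re_coe, re_smul, imI_sub, imI_add, imI_coe, imI_smul, imJ_sub, imJ_add,
    imJ_coe, imJ_smul, imK_sub, imK_add, imK_coe, imK_smul, re_star, imI_star, imJ_star, imK_star,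
    qi_re, qi_imI, qi_imJ, qi_imK, smul_eq_mul]
  linear_combination (2 * (r + x)) * hq + q.imK * hr

theorem exists_conj_qi_eq_qi_and_imK_conj_eq_zero {p : ℍ[ℝ]} (hp : p.imK ≠ 0) :
    ∃ u : ℍ[ℝ], ‖u‖ = 1 ∧ u * qi * u⁻¹ = qi ∧
      ∀ q : ℍ[ℝ], p.imJ * q.imK = p.imK * q.imJ → (u * q * u⁻¹).imK = 0 := by
  set r := √(p.imJ ^ 2 + p.imK ^ 2)
  have hr : r ^ 2 = p.imJ ^ 2 + p.imK ^ 2 := Real.sq_sqrt (by positivity)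
  set g : ℍ[ℝ] := ((r + p.imJ : ℝ) : ℍ[ℝ]) - p.imK • qi
  have hg : g ≠ 0 := fun h => hp (by simpa [g] using congrArg (·.imI) h)
  have hgqi : Commute g qi := (coe_commute _ _).sub_left ((Commute.refl qi).smul_left _)
  obtain ⟨u, hu, hconj⟩ := exists_norm_eq_one_conj_eq hg
  refine ⟨u, hu, by rw [hconj, mul_inv_eq_iff_eq_mul₀ hg, hgqi.eq], fun q hq => ?_⟩
  rw [hconj]
  exact imK_rotor_conj hr hq

theorem exists_conj_qi_eq_qi_and_imK_conj_eq_zero_of_coplanar {b c : ℍ[ℝ]}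
    (h : b.imJ * c.imK = b.imK * c.imJ) :
    ∃ u : ℍ[ℝ], ‖u‖ = 1 ∧ u * qi * u⁻¹ = qi ∧ (u * b * u⁻¹).imK = 0 ∧
      (u * c * u⁻¹).imK = 0 := by
  by_cases hb : b.imK = 0
  · by_cases hc : c.imK = 0
    · exact ⟨1, by simp, by simp, by simpa, by simpa⟩
    · obtain ⟨u, hu, huqi, hu0⟩ := exists_conj_qi_eq_qi_and_imK_conj_eq_zero hc
      exact ⟨u, hu, huqi, hu0 b (by linear_combination -h), hu0 c (mul_comm _ _)⟩
  · obtain ⟨u, hu, huqi, hu0⟩ := exists_conj_qi_eq_qi_and_imK_conj_eq_zero hb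
    exact ⟨u, hu, huqi, hu0 b (mul_comm _ _), hu0 c h⟩

theorem exists_eq_expQ_qk_mul_qi {q : ℍ[ℝ]} (hn : ‖q‖ = 1) (hre : q.re = 0) (hk : q.imK = 0) :
    ∃ t : ℝ, q = expQ t qk * qi := by
  set z : ℂ := ⟨q.imI, q.imJ⟩
  have hz : ‖z‖ = 1 := by
    have h := normSq_eq_norm_mul_self q
    rw [normSq_def', hn, hre, hk] at h
    rw [Complex.norm_def, Complex.normSq_mk, Real.sqrt_eq_one]
    linear_combination h
  refine ⟨z.arg, ?_⟩
  ext <;> simp only [expQ, re_mul, imI_mul, imJ_mul, imK_mul]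
  · simp [hre]
  · simpa [hz] using (Complex.norm_mul_cos_arg z).symm
  · simpa [hz] using (Complex.norm_mul_sin_arg z).symm
  · simp [hk]

theorem expQ_qk_mul_qi_mul_expQ_qk_mul_qi (s t : ℝ) :
    expQ s qk * qi * (expQ t qk * qi) = -expQ (s - t) qk := by
  ext <;> simp [expQ, re_mul, imI_mul, imJ_mul, imK_mul, Real.cos_sub, Real.sin_sub]
  ring

theorem eq_expQ_sub_of_mul_eq {γ θ : ℝ} {d : ℍ[ℝ]}
    (h : expQ γ qk * qi * qi = expQ θ qk * qi * d) : d = expQ (θ - γ) qk * qi := by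
  have hsq : expQ θ qk * qi * (expQ θ qk * qi) = -1 := by
    rw [expQ_qk_mul_qi_mul_expQ_qk_mul_qi, sub_self]
    simp [expQ]
  calc d = -(expQ θ qk * qi * (expQ θ qk * qi * d)) := by
        rw [← mul_assoc, hsq, neg_one_mul, neg_neg]
    _ = -(expQ θ qk * qi * (expQ γ qk * qi)) * qi := by rw [← h]; simp only [mul_assoc, neg_mul]
    _ = expQ (θ - γ) qk * qi := by rw [expQ_qk_mul_qi_mul_expQ_qk_mul_qi, neg_neg]

theorem four_punctured_sphere_normal_form_general (A B C D : ℍ[ℝ])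
    (hAnorm : ‖A‖ = 1) (hAre : A.re = 0)
    (hBnorm : ‖B‖ = 1) (hBre : B.re = 0)
    (hCnorm : ‖C‖ = 1) (hCre : C.re = 0)
    (hDre : D.re = 0)
    (hrel : B * A = C * D) :
    ∃ g : ℍ[ℝ], ∃ γ θ : ℝ, ‖g‖ = 1 ∧
      g * A * g⁻¹ = qi ∧
      g * B * g⁻¹ = expQ γ qk * qi ∧
      g * C * g⁻¹ = expQ θ qk * qi ∧
      g * D * g⁻¹ = expQ (θ - γ) qk * qi := by
  obtain ⟨g₁, hg₁, hg₁A⟩ := exists_conj_eq_qi hAnorm hAre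
  have hg₁0 : g₁ ≠ 0 := ne_zero_of_norm_ne_zero (hg₁ ▸ one_ne_zero)
  have hcoplanar := imJ_mul_imK_eq_of_mul_qi_eq ((re_conj hg₁0 B).trans hBre)
    ((re_conj hg₁0 C).trans hCre)
    (mul_self_eq_neg_one ((norm_conj hg₁0 C).trans hCnorm) ((re_conj hg₁0 C).trans hCre))
    ((re_conj hg₁0 D).trans hDre)
    (by rw [← hg₁A, conj_mul_conj₀ hg₁0, conj_mul_conj₀ hg₁0, hrel])
  obtain ⟨u, hu, huqi, hBk, hCk⟩ := exists_conj_qi_eq_qi_and_imK_conj_eq_zero_of_coplanar hcoplanar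
  set g := u * g₁
  have hg0 : g ≠ 0 := mul_ne_zero (ne_zero_of_norm_ne_zero (hu ▸ one_ne_zero)) hg₁0
  have hgA : g * A * g⁻¹ = qi := by rw [conj_mul_eq_conj_conj, hg₁A, huqi]
  obtain ⟨γ, hγ⟩ := exists_eq_expQ_qk_mul_qi (q := g * B * g⁻¹) (by rw [norm_conj hg0, hBnorm])
    (by rw [re_conj hg0, hBre]) (by rw [conj_mul_eq_conj_conj]; exact hBk)
  obtain ⟨θ, hθ⟩ := exists_eq_expQ_qk_mul_qi (q := g * C * g⁻¹) (by rw [norm_conj hg0, hCnorm])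
    (by rw [re_conj hg0, hCre]) (by rw [conj_mul_eq_conj_conj]; exact hCk)
  refine ⟨g, γ, θ, by rw [norm_mul, hu, hg₁, one_mul], hgA, hγ, hθ, eq_expQ_sub_of_mul_eq ?_⟩
  rw [← hγ, ← hθ, ← hgA, conj_mul_conj₀ hg0, conj_mul_conj₀ hg0, hrel]

/-- Surjectivity of the pillowcase parameterization of the traceless character variety of
the four-punctured sphere: any quadruple `(A,B,C,D)` of pure unit quaternions with
`BA = CD` is simultaneously conjugate to `(i, e^{γk}i, e^{θk}i, e^{(θ-γ)k}i)` for some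
`γ, θ ∈ ℝ`. -/
theorem four_punctured_sphere_normal_form (A B C D : ℍ[ℝ])
    (hAnorm : ‖A‖ = 1) (hAre : A.re = 0)
    (hBnorm : ‖B‖ = 1) (hBre : B.re = 0)
    (hCnorm : ‖C‖ = 1) (hCre : C.re = 0)
    (hDnorm : ‖D‖ = 1) (hDre : D.re = 0)
    (hrel : B * A = C * D) :
    ∃ g : ℍ[ℝ], ∃ γ θ : ℝ, ‖g‖ = 1 ∧
      g * A * g⁻¹ = qi ∧
      g * B * g⁻¹ = expQ γ qk * qi ∧
      g * C * g⁻¹ = expQ θ qk * qi ∧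
      g * D * g⁻¹ = expQ (θ - γ) qk * qi :=
  four_punctured_sphere_normal_form_general A B C D hAnorm hAre hBnorm hBre hCnorm hCre hDre hrel
end
end

section
/- Let M, H, L be unit quaternions with Re M = 0, Re H = 0, M·H = −H·M (equivalently, the commutator M H M⁻¹ H⁻¹ equals −1), and M·L = L·M. Then there exist a unit quaternion g and ℓ : ℝ such that g·M·g⁻¹ = i, g·H·g⁻¹ = j, and g·L·g⁻¹ = e^{ℓi}. Moreover e^{ℓi} is uniquely determined by (M,H,L): if g' is another unit quaternion with g'·M·g'⁻¹ = i, g'·H·g'⁻¹ = j and g'·L·g'⁻¹ = e^{ℓ'i}, then e^{ℓ'i} = e^{ℓi}. (This shows the space R^♮(N(K),K) of conjugacy classes of such triples, coming from the presented group ⟨μ_K, μ_H, μ_W, λ_K | μ_W = [μ_K, μ_H], [μ_K, λ_K] = 1⟩ with μ_K, μ_H traceless and μ_W ↦ −1, is a circle injecting into the pillowcase.) -/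
open Quaternion

noncomputable section

/-!
Anticommuting square roots `A, B` and `X, Y` of `-1` give two representations `σ, ρ` of the
quaternion group `Q₈`. Averaging `ρ(g) x σ(g)⁻¹` over `Q₈ / {±1}` turns any `x` into an
intertwiner `u`, with `u A = X u` and `u B = Y u`; the averages of `x = 1, X, Y, XY`,
multiplied on the left by `x⁻¹`, add up to `4`, so one of them is nonzero. In `ℍ` this
conjugates `(M, H)` to `(i, j)` by a unit quaternion `g`; then `g L g⁻¹` commutes with `i`, so
it lies on the circle `cos ℓ + sin ℓ • i`. Two such `g` differ by a quaternion commuting with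
`i` and `j`, i.e. by a real scalar, which does not change `g L g⁻¹`.
-/

structure IsQuaternionPair {R : Type*} [Ring R] (A B : R) : Prop where
  mul_self_left : A * A = -1
  mul_self_right : B * B = -1
  anticomm : B * A = -(A * B)

namespace IsQuaternionPair

variable {R : Type*} [Ring R] {A B : R}

theorem mul_mul_self_left (h : IsQuaternionPair A B) (t : R) : A * (A * t) = -t := by
  rw [← mul_assoc, h.mul_self_left, neg_one_mul]

theorem mul_mul_self_right (h : IsQuaternionPair A B) (t : R) : B * (B * t) = -t := by
  rw [← mul_assoc, h.mul_self_right, neg_one_mul]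

theorem anticomm_mul (h : IsQuaternionPair A B) (t : R) : B * (A * t) = -(A * (B * t)) := by
  rw [← mul_assoc, ← mul_assoc, h.anticomm, neg_mul]

end IsQuaternionPair

section Intertwiner

variable {R : Type*} [Ring R] {X Y A B : R}

/-- `∑ ρ(g) x σ(g)⁻¹` over the representatives `1, i, j, ij` of `Q₈ / {±1}`, where
`ρ` sends `i, j` to `X, Y` and `σ` sends them to `A, B`. -/
def averageIntertwiner (X Y A B x : R) : R :=
  x - X * x * A - Y * x * B - X * Y * x * (A * B)

theorem averageIntertwiner_mul_left (hXY : IsQuaternionPair X Y)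
    (hAB : IsQuaternionPair A B) (x : R) :
    averageIntertwiner X Y A B x * A = X * averageIntertwiner X Y A B x := by
  simp only [averageIntertwiner, sub_mul, mul_sub, mul_assoc, hAB.mul_self_left,
    hXY.mul_mul_self_left, hAB.mul_mul_self_left, hAB.anticomm, mul_neg, neg_neg, mul_one]
  abel

theorem averageIntertwiner_mul_right (hXY : IsQuaternionPair X Y)
    (hAB : IsQuaternionPair A B) (x : R) :
    averageIntertwiner X Y A B x * B = Y * averageIntertwiner X Y A B x := by
  simp only [averageIntertwiner, sub_mul, mul_sub, mul_assoc, hAB.mul_self_right,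
    hXY.mul_mul_self_right, hXY.anticomm_mul, mul_neg, neg_neg, mul_one]
  abel

theorem averageIntertwiner_one_sub (hXY : IsQuaternionPair X Y) :
    averageIntertwiner X Y A B 1 - X * averageIntertwiner X Y A B X
      - Y * averageIntertwiner X Y A B Y - X * Y * averageIntertwiner X Y A B (X * Y) = 4 := by
  simp only [averageIntertwiner, mul_sub, mul_assoc, one_mul, mul_one, hXY.mul_mul_self_left,
    hXY.mul_mul_self_right, hXY.anticomm_mul, hXY.mul_self_left, hXY.mul_self_right, mul_neg,
    neg_mul, neg_neg]
  noncomm_ring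
  norm_num

theorem exists_ne_zero_intertwiner (hXY : IsQuaternionPair X Y) (hAB : IsQuaternionPair A B)
    (h4 : (4 : R) ≠ 0) : ∃ u : R, u ≠ 0 ∧ u * A = X * u ∧ u * B = Y * u := by
  suffices ∃ x, averageIntertwiner X Y A B x ≠ 0 from
    let ⟨x, hx⟩ := this
    ⟨_, hx, averageIntertwiner_mul_left hXY hAB x, averageIntertwiner_mul_right hXY hAB x⟩
  by_contra! h
  have := averageIntertwiner_one_sub (A := A) (B := B) hXY
  simp only [h, mul_zero, sub_zero] at this
  exact h4 this.symm

end Intertwiner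

section Conjugation

variable {G₀ : Type*} [GroupWithZero G₀]

theorem Commute.conj₀ {a b : G₀} (h : Commute a b) (g : G₀) :
    Commute (g * a * g⁻¹) (g * b * g⁻¹) := by
  rcases eq_or_ne g 0 with rfl | hg
  · simp
  · simp only [Commute, SemiconjBy, mul_assoc, inv_mul_cancel_left₀ hg]
    rw [← mul_assoc a, h.eq, mul_assoc]

theorem conj_eq_conj_iff_commute {g g' : G₀} (hg : g ≠ 0) (hg' : g' ≠ 0) (b : G₀) :
    g' * b * g'⁻¹ = g * b * g⁻¹ ↔ Commute (g' * g⁻¹) (g * b * g⁻¹) := by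
  have hc : g' * g⁻¹ ≠ 0 := mul_ne_zero hg' (inv_ne_zero hg)
  have hconj : g' * b * g'⁻¹ = g' * g⁻¹ * (g * b * g⁻¹) * (g' * g⁻¹)⁻¹ := by
    simp [mul_assoc, hg]
  rw [hconj, Commute, SemiconjBy, mul_inv_eq_iff_eq_mul₀ hc]

end Conjugation

@[simp] theorem qj_re : qj.re = 0 := rfl
@[simp] theorem qj_imI : qj.imI = 0 := rfl
@[simp] theorem qj_imJ : qj.imJ = 1 := rfl
@[simp] theorem qj_imK : qj.imK = 0 := rfl

theorem isQuaternionPair_qi_qj : IsQuaternionPair qi qj where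
  mul_self_left := by ext <;> simp [re_mul, imI_mul, imJ_mul, imK_mul]
  mul_self_right := by ext <;> simp [re_mul, imI_mul, imJ_mul, imK_mul]
  anticomm := by ext <;> simp [re_mul, imI_mul, imJ_mul, imK_mul]

theorem Quaternion.four_ne_zero : (4 : ℍ[ℝ]) ≠ 0 :=
  fun h => _root_.four_ne_zero (congrArg QuaternionAlgebra.re h : (4 : ℝ) = 0)

theorem Quaternion.mul_self_eq_neg_one_s6 {q : ℍ[ℝ]} (hnorm : ‖q‖ = 1) (hre : q.re = 0) :
    q * q = -1 := by
  rw [← sq, sq_eq_neg_normSq.mpr hre, normSq_eq_norm_mul_self, hnorm, mul_one, coe_one]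

theorem Real.exists_cos_eq_sin_eq {a b : ℝ} (h : a ^ 2 + b ^ 2 = 1) :
    ∃ t : ℝ, Real.cos t = a ∧ Real.sin t = b := by
  obtain ⟨t, ht⟩ := (Complex.norm_eq_one_iff ⟨a, b⟩).mp <| by
    rw [Complex.norm_def, Complex.normSq_mk, ← sq, ← sq, h, Real.sqrt_one]
  exact ⟨t, by simpa using congrArg Complex.re ht, by simpa using congrArg Complex.im ht⟩

theorem imJ_eq_zero_and_imK_eq_zero_of_commute_qi {q : ℍ[ℝ]} (h : Commute q qi) :
    q.imJ = 0 ∧ q.imK = 0 := by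
  have hJ := congrArg QuaternionAlgebra.imJ h.eq
  have hK := congrArg QuaternionAlgebra.imK h.eq
  simp [imJ_mul, imK_mul] at hJ hK
  constructor <;> linarith

theorem eq_re_of_commute_qi_of_commute_qj {q : ℍ[ℝ]} (hi : Commute q qi) (hj : Commute q qj) :
    q = q.re := by
  obtain ⟨hJ, hK⟩ := imJ_eq_zero_and_imK_eq_zero_of_commute_qi hi
  have hI := congrArg QuaternionAlgebra.imK hj.eq
  simp [imK_mul] at hI
  ext <;> simp [hJ, hK]
  linarith

theorem exists_eq_expQ_qi_of_commute {q : ℍ[ℝ]} (hnorm : ‖q‖ = 1) (h : Commute q qi) :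
    ∃ t : ℝ, q = expQ t qi := by
  obtain ⟨hJ, hK⟩ := imJ_eq_zero_and_imK_eq_zero_of_commute_qi h
  have hsq : q.re ^ 2 + q.imI ^ 2 = 1 := by
    have := normSq_def' q
    rw [normSq_eq_norm_mul_self, hnorm, hJ, hK] at this
    linarith
  obtain ⟨t, hcos, hsin⟩ := Real.exists_cos_eq_sin_eq hsq
  exact ⟨t, by ext <;> simp [expQ, hcos, hsin, hJ, hK]⟩

theorem exists_norm_eq_one_conj_eq_qi_qj {M H : ℍ[ℝ]} (h : IsQuaternionPair M H) :
    ∃ g : ℍ[ℝ], ‖g‖ = 1 ∧ g * M * g⁻¹ = qi ∧ g * H * g⁻¹ = qj := by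
  obtain ⟨u, hu, huM, huH⟩ :=
    exists_ne_zero_intertwiner isQuaternionPair_qi_qj h Quaternion.four_ne_zero
  have hg : ‖(‖u‖⁻¹ : ℝ) • u‖ = 1 := norm_smul_inv_norm hu
  have hg0 : (‖u‖⁻¹ : ℝ) • u ≠ 0 := norm_ne_zero_iff.mp (by simp [hg])
  refine ⟨_, hg, ?_, ?_⟩
  · rw [mul_inv_eq_iff_eq_mul₀ hg0, smul_mul_assoc, huM, mul_smul_comm]
  · rw [mul_inv_eq_iff_eq_mul₀ hg0, smul_mul_assoc, huH, mul_smul_comm]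

/-- The space `R^♮(N(K),K)` is a circle: any triple `(M,H,L)` of unit quaternions with
`M, H` traceless, `MH = -HM` and `ML = LM` is conjugate to `(i, j, e^{ℓi})` for some
`ℓ : ℝ`, and the value `e^{ℓi}` is uniquely determined by the triple. -/
theorem earring_neighborhood_circle (M H L : ℍ[ℝ])
    (hMnorm : ‖M‖ = 1) (hMre : M.re = 0)
    (hHnorm : ‖H‖ = 1) (hHre : H.re = 0)
    (hLnorm : ‖L‖ = 1)
    (hanti : M * H = -(H * M))
    (hcomm : M * L = L * M) :
    ∃ g : ℍ[ℝ], ∃ ℓ : ℝ, ‖g‖ = 1 ∧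
      g * M * g⁻¹ = qi ∧ g * H * g⁻¹ = qj ∧ g * L * g⁻¹ = expQ ℓ qi ∧
      ∀ g' : ℍ[ℝ], ∀ ℓ' : ℝ, ‖g'‖ = 1 →
        g' * M * g'⁻¹ = qi → g' * H * g'⁻¹ = qj → g' * L * g'⁻¹ = expQ ℓ' qi →
        expQ ℓ' qi = expQ ℓ qi := by
  have hMH : IsQuaternionPair M H :=
    ⟨mul_self_eq_neg_one_s6 hMnorm hMre, mul_self_eq_neg_one_s6 hHnorm hHre, by rw [hanti, neg_neg]⟩
  obtain ⟨g, hg, hgM, hgH⟩ := exists_norm_eq_one_conj_eq_qi_qj hMH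
  have hg0 : g ≠ 0 := norm_ne_zero_iff.mp (by simp [hg])
  obtain ⟨ℓ, hℓ⟩ := exists_eq_expQ_qi_of_commute (by simp [hg, hLnorm])
    (hgM ▸ (Commute.conj₀ hcomm g).symm)
  refine ⟨g, ℓ, hg, hgM, hgH, hℓ, fun g' ℓ' hg' hg'M hg'H hg'L => ?_⟩
  have hg'0 : g' ≠ 0 := norm_ne_zero_iff.mp (by simp [hg'])
  have hi := (conj_eq_conj_iff_commute hg0 hg'0 M).mp (hg'M.trans hgM.symm)
  have hj := (conj_eq_conj_iff_commute hg0 hg'0 H).mp (hg'H.trans hgH.symm)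
  rw [hgM] at hi
  rw [hgH] at hj
  rw [← hg'L, ← hℓ, conj_eq_conj_iff_commute hg0 hg'0,
    eq_re_of_commute_qi_of_commute_qj hi hj]
  exact coe_commute _ _
end
end

section
/- Let G, A, B, S be groups and i : S → A, j : S → B group homomorphisms. For a homomorphism ρ from any group into G, let Stab(ρ) denote the subgroup {g ∈ G | ∀x, g·ρ(x)·g⁻¹ = ρ(x)} (the centralizer of the image of ρ). Fix homomorphisms ρ_A : A → G and ρ_B : B → G with ρ_A ∘ i = ρ_B ∘ j =: ρ_S, and note Stab(ρ_A) and Stab(ρ_B) are subgroups of Stab(ρ_S). Let F be the set of pairs (ρ_A', ρ_B') of homomorphisms ρ_A' : A → G, ρ_B' : B → G with ρ_A' ∘ i = ρ_B' ∘ j, such that ρ_A' is conjugate to ρ_A (i.e., ρ_A' = g ρ_A g⁻¹ pointwise for some g ∈ G) and ρ_B' is conjugate to ρ_B, and let G act on F by simultaneous conjugation. Then the orbit set F/G is in bijection with the double coset space Stab(ρ_A) \ Stab(ρ_S) / Stab(ρ_B). -/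
/-!
The key fact is that `a ρ a⁻¹ = b ρ b⁻¹` iff `a⁻¹ b` centralizes the image of `ρ`. Hence a pair
`(a ρ_A a⁻¹, b ρ_B b⁻¹)` agrees on `S` iff `s = a⁻¹ b ∈ Stab(ρ_S)`, and conjugating by `a⁻¹`
brings it to the normal form `(ρ_A, s ρ_B s⁻¹)`. Two normal forms for `s` and `s'` are conjugate
by `g` iff `g ∈ Stab(ρ_A)` and `(g s)⁻¹ s' ∈ Stab(ρ_B)`, i.e. iff `s'` lies in the double coset
`Stab(ρ_A) s Stab(ρ_B)`.
-/

open Subgroup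

section Conjugation

variable {G M : Type*} [Group G]

theorem conj_eq_conj_iff_inv_mul_mem_centralizer (f : M → G) (a b : G) :
    (∀ m, a * f m * a⁻¹ = b * f m * b⁻¹) ↔ a⁻¹ * b ∈ centralizer (Set.range f) := by
  rw [mem_centralizer_iff, Set.forall_mem_range]
  refine forall_congr' fun m => ?_
  rw [← mul_left_inj b, ← mul_right_inj a⁻¹]
  simp only [mul_assoc, inv_mul_cancel_left, inv_mul_cancel, mul_one]

theorem conj_eq_self_iff_mem_centralizer (f : M → G) (g : G) :
    (∀ m, g * f m * g⁻¹ = f m) ↔ g ∈ centralizer (Set.range f) := by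
  simpa using conj_eq_conj_iff_inv_mul_mem_centralizer f g 1

end Conjugation

section Amalgam

variable {G A B S : Type*} [Group G] [MulOneClass A] [MulOneClass B] [MulOneClass S]
  (i : S →* A) (j : S →* B) (ρA : A →* G) (ρB : B →* G)

def amalgamFiber : Set ((A →* G) × (B →* G)) :=
  {ρ' | ρ'.1.comp i = ρ'.2.comp j ∧
    (∃ g : G, ∀ a, ρ'.1 a = g * ρA a * g⁻¹) ∧ (∃ g : G, ∀ b, ρ'.2 b = g * ρB b * g⁻¹)}

def SimulConj (F : Set ((A →* G) × (B →* G))) (x y : F) : Prop :=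
  ∃ g : G, (∀ a, y.val.1 a = g * x.val.1 a * g⁻¹) ∧ (∀ b, y.val.2 b = g * x.val.2 b * g⁻¹)

theorem simulConj_equivalence (F : Set ((A →* G) × (B →* G))) : Equivalence (SimulConj F) where
  refl _ := ⟨1, by simp, by simp⟩
  symm := fun ⟨g, hA, hB⟩ => ⟨g⁻¹, fun a => by rw [hA]; group, fun b => by rw [hB]; group⟩
  trans := fun ⟨g, hA, hB⟩ ⟨g', hA', hB'⟩ =>
    ⟨g' * g, fun a => by rw [hA', hA]; group, fun b => by rw [hB', hB]; group⟩

variable {i j ρA ρB}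

theorem inv_mul_mem_centralizer_of_comp_eq (hcompat : ρA.comp i = ρB.comp j)
    {σA : A →* G} {σB : B →* G} (hσ : σA.comp i = σB.comp j) {a b : G}
    (ha : ∀ x, σA x = a * ρA x * a⁻¹) (hb : ∀ x, σB x = b * ρB x * b⁻¹) :
    a⁻¹ * b ∈ centralizer (Set.range (ρA.comp i)) := by
  refine (conj_eq_conj_iff_inv_mul_mem_centralizer _ a b).1 fun s => ?_
  calc a * ρA (i s) * a⁻¹ = σA (i s) := (ha _).symm
    _ = σB (j s) := DFunLike.congr_fun hσ s
    _ = b * ρB (j s) * b⁻¹ := hb _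
    _ = b * ρA (i s) * b⁻¹ := by rw [← MonoidHom.comp_apply ρB, ← hcompat, MonoidHom.comp_apply]

theorem centralizer_range_le_of_comp_eq (hcompat : ρA.comp i = ρB.comp j) :
    centralizer (Set.range ρB) ≤ centralizer (Set.range (ρA.comp i)) := by
  rw [hcompat]
  exact centralizer_le (Set.range_comp_subset_range j ρB)

def fiberRep (hcompat : ρA.comp i = ρB.comp j) (s : centralizer (Set.range (ρA.comp i))) :
    amalgamFiber i j ρA ρB :=
  ⟨(ρA, (MulAut.conj (s : G)).toMonoidHom.comp ρB), by
    refine ⟨MonoidHom.ext fun t => ?_, ⟨1, by simp⟩, ⟨s, fun _ => rfl⟩⟩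
    calc ρA (i t) = s * ρA (i t) * (s : G)⁻¹ :=
          ((conj_eq_self_iff_mem_centralizer _ _).2 s.2 t).symm
      _ = s * ρB (j t) * (s : G)⁻¹ := by rw [← MonoidHom.comp_apply ρB, ← hcompat]; rfl⟩

theorem mk_fiberRep_eq_iff (hcompat : ρA.comp i = ρB.comp j)
    (s s' : centralizer (Set.range (ρA.comp i))) :
    Quot.mk (SimulConj _) (fiberRep hcompat s) =
        Quot.mk (SimulConj _) (fiberRep hcompat s') ↔
      DoubleCoset.mk ((centralizer (Set.range ρA)).subgroupOf _)
          ((centralizer (Set.range ρB)).subgroupOf _) s =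
        DoubleCoset.mk _ _ s' := by
  rw [(simulConj_equivalence _).quot_mk_eq_iff, DoubleCoset.eq]
  simp only [SimulConj, fiberRep, MonoidHom.comp_apply, MulEquiv.coe_toMonoidHom,
    MulAut.conj_apply, mem_subgroupOf]
  constructor
  · rintro ⟨g, hgA, hgB⟩
    have hg : g ∈ centralizer (Set.range ρA) :=
      (conj_eq_self_iff_mem_centralizer _ g).1 fun a => (hgA a).symm
    have hk : (g * s)⁻¹ * s' ∈ centralizer (Set.range ρB) :=
      (conj_eq_conj_iff_inv_mul_mem_centralizer _ _ _).1 fun b => by rw [hgB]; group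
    refine ⟨⟨g, centralizer_le (Set.range_comp_subset_range i ρA) hg⟩, hg,
      ⟨_, centralizer_range_le_of_comp_eq hcompat hk⟩, hk, ?_⟩
    ext
    simp only [coe_mul]
    group
  · rintro ⟨h, hh, k, hk, rfl⟩
    refine ⟨h, fun a => ((conj_eq_self_iff_mem_centralizer _ _).2 hh a).symm, fun b => ?_⟩
    calc ((h * s * k : centralizer _) : G) * ρB b * ((h * s * k : centralizer _) : G)⁻¹
        = h * s * (k * ρB b * (k : G)⁻¹) * (s : G)⁻¹ * (h : G)⁻¹ := by simp only [coe_mul]; group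
      _ = h * (s * ρB b * (s : G)⁻¹) * (h : G)⁻¹ := by
        rw [(conj_eq_self_iff_mem_centralizer _ _).2 hk b]; group

theorem exists_mk_fiberRep_eq (hcompat : ρA.comp i = ρB.comp j) (x : amalgamFiber i j ρA ρB) :
    ∃ s, Quot.mk (SimulConj _) (fiberRep hcompat s) = Quot.mk _ x := by
  obtain ⟨hx, ⟨a, ha⟩, ⟨b, hb⟩⟩ := x.2
  refine ⟨⟨a⁻¹ * b, inv_mul_mem_centralizer_of_comp_eq hcompat hx ha hb⟩,
    Quot.sound ⟨a, fun t => ha t, fun t => ?_⟩⟩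
  simp only [fiberRep, MonoidHom.comp_apply, MulEquiv.coe_toMonoidHom, MulAut.conj_apply, hb]
  group

def doubleCosetToFiberQuot (hcompat : ρA.comp i = ρB.comp j) :
    DoubleCoset.Quotient (G := centralizer (Set.range (ρA.comp i)))
        (↑((centralizer (Set.range ρA)).subgroupOf (centralizer (Set.range (ρA.comp i)))))
        (↑((centralizer (Set.range ρB)).subgroupOf (centralizer (Set.range (ρA.comp i))))) →
      Quot (SimulConj (amalgamFiber i j ρA ρB)) :=
  Quotient.lift (fun s => Quot.mk _ (fiberRep hcompat s)) fun s s' hss' =>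
    (mk_fiberRep_eq_iff hcompat s s').2 (Quotient.sound hss')

theorem doubleCosetToFiberQuot_bijective (hcompat : ρA.comp i = ρB.comp j) :
    Function.Bijective (doubleCosetToFiberQuot hcompat) := by
  refine ⟨fun q q' => ?_, fun x => ?_⟩
  · induction q, q' using Quotient.inductionOn₂ with
    | h s s' => exact (mk_fiberRep_eq_iff hcompat s s').1
  · induction x using Quot.ind with
    | mk x =>
      obtain ⟨s, hs⟩ := exists_mk_fiberRep_eq hcompat x
      exact ⟨DoubleCoset.mk _ _ s, hs⟩

end Amalgam

/-- The fiber of the character variety of an amalgamated free product over a pair of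
conjugacy classes: let `i : S → A`, `j : S → B` be group homomorphisms, `ρ_A : A → G`,
`ρ_B : B → G` homomorphisms agreeing on `S` (via `i`, `j`), with restriction `ρ_S`.
Writing `Stab(ρ)` for the centralizer of the image of `ρ`, the set of pairs
`(ρ_A', ρ_B')`, agreeing on `S`, with `ρ_A'` conjugate to `ρ_A` and `ρ_B'` conjugate to
`ρ_B`, modulo simultaneous conjugation by `G`, is in bijection with the double coset
space `Stab(ρ_A) \ Stab(ρ_S) / Stab(ρ_B)`. -/
theorem fiber_equiv_double_coset
    {G A B S : Type*} [Group G] [Group A] [Group B] [Group S]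
    (i : S →* A) (j : S →* B) (ρA : A →* G) (ρB : B →* G)
    (hcompat : ρA.comp i = ρB.comp j)
    -- the stabilizers (centralizers of the images)
    (StabA StabB StabS : Subgroup G)
    (hStabA : StabA = Subgroup.centralizer (Set.range ρA))
    (hStabB : StabB = Subgroup.centralizer (Set.range ρB))
    (hStabS : StabS = Subgroup.centralizer (Set.range (ρA.comp i)))
    -- the set `F` of pairs agreeing on `S`, conjugate to `(ρA, ρB)` factorwise
    (F : Set ((A →* G) × (B →* G)))
    (hF : F = {ρ' : (A →* G) × (B →* G) |
      ρ'.1.comp i = ρ'.2.comp j ∧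
      (∃ g : G, ∀ a : A, ρ'.1 a = g * ρA a * g⁻¹) ∧
      (∃ g : G, ∀ b : B, ρ'.2 b = g * ρB b * g⁻¹)})
    -- the simultaneous-conjugation relation on `F`
    (r : F → F → Prop)
    (hr : r = fun x y => ∃ g : G,
      (∀ a : A, y.val.1 a = g * x.val.1 a * g⁻¹) ∧
      (∀ b : B, y.val.2 b = g * x.val.2 b * g⁻¹)) :
    Nonempty (Quot r ≃
      DoubleCoset.Quotient
        (Subtype.val ⁻¹' (StabA : Set G) : Set StabS)
        (Subtype.val ⁻¹' (StabB : Set G) : Set StabS)) := by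
  subst hStabA hStabB hStabS hF hr
  exact ⟨(Equiv.ofBijective _ (doubleCosetToFiberQuot_bijective hcompat)).symm⟩
end

section
/- Let m be an odd positive integer and a₁, …, a_m integers. Define rationals v_m, v_{m−1}, …, v₁ by v_m = a_m and v_j = a_j + 1/v_{j+1}, assuming v_{j+1} ≠ 0 for each j < m (so the continued fraction a₁ + 1/(a₂ + 1/(a₃ + ⋯)) is defined). Let p, q be coprime integers with v₁ = p/q. Define the 3×3 rational matrices M(a) with rows (1,0,0), (0,1+a,−a), (0,a,1−a) and N(a) with rows (1+a,−a,0), (a,1−a,0), (0,0,1). Then the alternating product M(−a₁)·N(a₂)·M(−a₃)·⋯·N(a_{m−1})·M(−a_m) applied to the column vector (1, 1, 0)ᵀ equals (q, q−p, −p)ᵀ or (−q, −(q−p), p)ᵀ. -/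
open Matrix

/-- The matrix `M(a)` with rows `(1,0,0)`, `(0,1+a,−a)`, `(0,a,1−a)`. -/
def Mmat (a : ℤ) : Matrix (Fin 3) (Fin 3) ℚ :=
  !![1, 0, 0; 0, 1 + (a : ℚ), -(a : ℚ); 0, (a : ℚ), 1 - (a : ℚ)]

/-- The matrix `N(a)` with rows `(1+a,−a,0)`, `(a,1−a,0)`, `(0,0,1)`. -/
def Nmat (a : ℤ) : Matrix (Fin 3) (Fin 3) ℚ :=
  !![1 + (a : ℚ), -(a : ℚ), 0; (a : ℚ), 1 - (a : ℚ), 0; 0, 0, 1]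

private lemma twobridge_key : ∀ m : ℕ, Odd m → 0 < m → ∀ (a : ℕ → ℤ) (v : ℕ → ℚ),
    v m = a m →
    (∀ j : ℕ, 1 ≤ j → j < m → v (j + 1) ≠ 0 ∧ v j = a j + 1 / v (j + 1)) →
    ∃ P Q : ℤ, IsCoprime P Q ∧ Q ≠ 0 ∧ (P : ℚ) = v 1 * Q ∧
      (((List.range m).map
        (fun j => if (j + 1) % 2 = 1 then Mmat (-(a (j + 1))) else Nmat (a (j + 1)))).prod).mulVec
        ![1, 1, 0] = ![(Q : ℚ), (Q : ℚ) - (P : ℚ), -(P : ℚ)] := by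
  intro m
  induction m using Nat.strong_induction_on with
  | _ m IH =>
    intro hodd hpos a v hvm hvrec
    obtain ⟨k, hk⟩ := hodd
    match m, hpos with
    | 1, _ =>
      refine ⟨a 1, 1, isCoprime_one_right, one_ne_zero, by simp [hvm], ?_⟩
      have : ((List.range 1).map
          (fun j => if (j + 1) % 2 = 1 then Mmat (-(a (j + 1))) else Nmat (a (j + 1)))).prod
          = Mmat (-(a 1)) := by
        simp [List.range_succ]
      rw [this]
      funext i
      fin_cases i <;>
        simp [Mmat, Matrix.mulVec, dotProduct, Fin.sum_univ_three] <;> ring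
    | (n + 2), _ =>
      have hnodd : Odd n := ⟨k - 1, by omega⟩
      have hnpos : 0 < n := by omega
      obtain ⟨P', Q', hcop', hQ'0, hPv, hw⟩ :=
        IH n (by omega) hnodd hnpos (fun j => a (j + 2)) (fun j => v (j + 2))
          (by simpa using hvm)
          (fun j hj1 hjn => by
            have := hvrec (j + 2) (by omega) (by omega)
            constructor
            · exact this.1
            · exact this.2)
      have h1 := hvrec 1 (le_refl 1) (by omega)
      have h2 := hvrec 2 (by omega) (by omega)
      have hv2ne : v 2 ≠ 0 := h1.1
      have hv3ne : v 3 ≠ 0 := h2.1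
      have hv1 : v 1 = a 1 + 1 / v 2 := h1.2
      have hv2 : v 2 = a 2 + 1 / v 3 := h2.2
      have hPvq : (P' : ℚ) = v 3 * Q' := hPv
      have hP'Q : (P' : ℚ) ≠ 0 := by
        rw [hPvq]
        exact mul_ne_zero hv3ne (Int.cast_ne_zero.mpr hQ'0)
      have hP'0 : P' ≠ 0 := by exact_mod_cast hP'Q
      set Q2 : ℤ := Q' + a 2 * P' with hQ2def
      set P : ℤ := P' + a 1 * Q2 with hPdef
      -- rational identities
      have hQ2v : (Q2 : ℚ) = v 2 * P' := by
        rw [hQ2def, hv2]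
        push_cast
        field_simp [hv3ne]
        rw [hPvq]; ring
      have hQ2Q : (Q2 : ℚ) ≠ 0 := by
        rw [hQ2v]; exact mul_ne_zero hv2ne hP'Q
      have hQ20 : Q2 ≠ 0 := by exact_mod_cast hQ2Q
      have hPv1 : (P : ℚ) = v 1 * Q2 := by
        rw [hPdef, hv1]
        push_cast
        field_simp [hv2ne]
        rw [hQ2v]; ring
      have hcopnew : IsCoprime P Q2 := by
        have c1 : IsCoprime Q2 P' := hcop'.symm.add_mul_right_left (a 2)
        exact c1.symm.add_mul_right_left (a 1)
      refine ⟨P, Q2, hcopnew, hQ20, hPv1, ?_⟩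
      -- decompose the list
      set F : ℕ → Matrix (Fin 3) (Fin 3) ℚ :=
        fun j => if (j + 1) % 2 = 1 then Mmat (-(a (j + 1))) else Nmat (a (j + 1)) with hFdef
      have hlist : (List.range (n + 2)).map F
          = F 0 :: F 1 :: (List.range n).map (fun j => F (j + 2)) := by
        rw [List.range_succ_eq_map, List.range_succ_eq_map]
        simp only [List.map_cons, List.map_map]
        rfl
      have htail : (List.range n).map (fun j => F (j + 2))
          = (List.range n).map (fun j => if (j + 1) % 2 = 1 then
              Mmat (-(a (j + 1 + 2))) else Nmat (a (j + 1 + 2))) := by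
        apply List.map_congr_left
        intro j _
        have hmod : (j + 2 + 1) % 2 = (j + 1) % 2 := by omega
        have hidx : j + 2 + 1 = j + 1 + 2 := by omega
        rw [hFdef]
        simp only [hmod, hidx]
      have hF0 : F 0 = Mmat (-(a 1)) := by rw [hFdef]; norm_num
      have hF1 : F 1 = Nmat (a 2) := by rw [hFdef]; norm_num
      have hwtail : (((List.range n).map (fun j => F (j + 2))).prod).mulVec ![1, 1, 0]
          = ![(Q' : ℚ), (Q' : ℚ) - (P' : ℚ), -(P' : ℚ)] := by
        rw [htail]
        exact hw
      rw [hlist, List.prod_cons, List.prod_cons, ← Matrix.mulVec_mulVec, ← Matrix.mulVec_mulVec,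
        hwtail, hF0, hF1]
      funext i
      fin_cases i <;>
        simp [Mmat, Nmat, Matrix.mulVec, dotProduct, Fin.sum_univ_three,
          hPdef, hQ2def] <;> push_cast <;> ring

/-- The linear-algebra computation determining the image in the pillowcase of the
traceless character variety of the rational tangle of the 2-bridge knot `K(p/q)`: if
`p/q` has continued fraction expansion `a₁ + 1/(a₂ + 1/(a₃ + ⋯))` (of odd length `m`),
then `M(−a₁)·N(a₂)·M(−a₃)⋯N(a_{m−1})·M(−a_m)` applied to `(1,1,0)ᵀ` is
`±(q, q−p, −p)ᵀ`. -/
theorem twobridge_matrix_computation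
    (m : ℕ) (hmodd : Odd m) (hmpos : 0 < m)
    (a : ℕ → ℤ) (v : ℕ → ℚ)
    (hvm : v m = a m)
    (hvrec : ∀ j : ℕ, 1 ≤ j → j < m → v (j + 1) ≠ 0 ∧ v j = a j + 1 / v (j + 1))
    (p q : ℤ) (hcop : IsCoprime p q) (hq : q ≠ 0)
    (hpq : v 1 = (p : ℚ) / (q : ℚ))
    (P : Matrix (Fin 3) (Fin 3) ℚ)
    (hP : P = ((List.range m).map
      (fun j => if (j + 1) % 2 = 1 then Mmat (-(a (j + 1))) else Nmat (a (j + 1)))).prod) :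
    P.mulVec ![1, 1, 0] = ![(q : ℚ), (q : ℚ) - (p : ℚ), -(p : ℚ)] ∨
    P.mulVec ![1, 1, 0] = ![-(q : ℚ), -((q : ℚ) - (p : ℚ)), (p : ℚ)] := by
  obtain ⟨P', Q', hcop', hQ'0, hPv, hw⟩ := twobridge_key m hmodd hmpos a v hvm hvrec
  rw [← hP] at hw
  have hqQ : (q : ℚ) ≠ 0 := Int.cast_ne_zero.mpr hq
  have hcross : (P' : ℚ) * q = p * Q' := by
    rw [hPv, hpq]; field_simp
  have hcrossZ : P' * q = p * Q' := by exact_mod_cast hcross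
  have hdvd : q ∣ Q' := by
    have : q ∣ p * Q' := ⟨P', by linarith [hcrossZ]⟩
    exact (hcop.symm.dvd_of_dvd_mul_left this)
  obtain ⟨t, ht⟩ := hdvd
  have hP't : P' = p * t := by
    have : P' * q = p * t * q := by rw [hcrossZ, ht]; ring
    exact mul_right_cancel₀ hq this
  have hunit : IsUnit t := hcop'.isUnit_of_dvd' ⟨p, by rw [hP't]; ring⟩ ⟨q, by rw [ht]; ring⟩
  rcases Int.isUnit_iff.mp hunit with h1 | h1
  · left
    rw [hw, hP't, ht, h1]
    push_cast; norm_num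
  · right
    rw [hw, hP't, ht, h1]
    funext i
    fin_cases i <;> push_cast <;> ring_nf <;> simp
end

section
/- Let p, q, r be odd integers and s an even integer with p·r + q·s = 1, and let γ : ℝ. Note that (p + s + q − r − 1)/2 and (s − r − 1)/2 are integers. Set M := (−1)^{(p+s+q−r−1)/2} · i and N := (−1)^{(s−r−1)/2} · e^{γk} · i. Then M^{s+p} · N^{q−r} = i and N^{−r} · M^{s} = e^{γk} · i. (This is the explicit binary dihedral cross section s : I → V_{p,q,r,s} of the restriction of the torus-knot tangle character variety to the pillowcase, in the case p, q, r odd and s even; its image in the pillowcase is a straight line segment.) -/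
open Quaternion

noncomputable section

/-! `M` and `N` are pure unit quaternions up to sign, so `M² = N² = -1`. Hence an odd power of
`M` times an even power of `N` is `±M`, and the exponents `e₁`, `e₂` are exactly the ones for
which the two signs `(-1)^{e₁}` (resp. `(-1)^{e₂}`) cancel. -/

section NegOneZPow

variable {α : Type*} [DivisionMonoid α] [HasDistribNeg α]

lemma neg_one_zpow_mul_sq (e : ℤ) (a : α) : ((-1) ^ e * a) ^ 2 = a ^ 2 := by
  rw [neg_one_zpow_eq_ite]
  split_ifs <;> simp

lemma neg_one_zpow_mul_neg_one_zpow_mul (e : ℤ) (a : α) : (-1) ^ e * ((-1) ^ e * a) = a := by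
  rw [neg_one_zpow_eq_ite]
  split_ifs <;> simp

lemma zpow_two_mul_of_sq_eq_neg_one {a : α} (ha : a ^ 2 = -1) (m : ℤ) :
    a ^ (2 * m) = (-1) ^ m := by
  rw [zpow_mul, zpow_ofNat, ha]

end NegOneZPow

section SqEqNegOne

variable {R : Type*} [DivisionRing R] {a b : R}

lemma zpow_two_mul_add_one_of_sq_eq_neg_one (ha : a ^ 2 = -1) (m : ℤ) :
    a ^ (2 * m + 1) = (-1) ^ m * a := by
  have ha₀ : a ≠ 0 := by
    rintro rfl
    simp at ha
  rw [zpow_add_one₀ ha₀, zpow_two_mul_of_sq_eq_neg_one ha]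

lemma zpow_mul_zpow_of_sq_eq_neg_one (ha : a ^ 2 = -1) (hb : b ^ 2 = -1) {x y e : ℤ}
    (hy : Even y) (he : 2 * e = x + y - 1) : a ^ x * b ^ y = (-1) ^ e * a := by
  obtain ⟨n, rfl⟩ := hy
  obtain rfl : x = 2 * (e - n) + 1 := by omega
  have hcomm : Commute a ((-1) ^ n) := (Commute.neg_one_right a).zpow_right₀ n
  rw [← two_mul, zpow_two_mul_add_one_of_sq_eq_neg_one ha, zpow_two_mul_of_sq_eq_neg_one hb,
    mul_assoc, hcomm.eq, ← mul_assoc, ← zpow_add₀ (neg_ne_zero.2 one_ne_zero), sub_add_cancel]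

end SqEqNegOne

lemma Quaternion.sq_eq_neg_one_of_re_eq_zero_of_normSq_eq_one {R : Type*} [CommRing R]
    [LinearOrder R] [IsStrictOrderedRing R] {a : ℍ[R]} (hre : a.re = 0) (hnorm : normSq a = 1) :
    a ^ 2 = -1 := by
  rw [sq_eq_neg_normSq.2 hre, hnorm, coe_one]

lemma normSq_qi : normSq qi = 1 := by
  rw [normSq_def']
  simp [qi]

lemma qi_sq : qi ^ 2 = -1 :=
  sq_eq_neg_one_of_re_eq_zero_of_normSq_eq_one rfl normSq_qi

lemma expQ_qk_mul_qi_sq (γ : ℝ) : (expQ γ qk * qi) ^ 2 = -1 := by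
  refine sq_eq_neg_one_of_re_eq_zero_of_normSq_eq_one ?_ ?_
  · simp only [expQ, re_mul, re_add, re_coe, re_smul, smul_eq_mul, imI_add, imI_coe, imI_smul,
      zero_add, imJ_add, imJ_coe, imJ_smul, imK_add, imK_coe, imK_smul]
    simp [qi, qk]
  · rw [map_mul, normSq_qi, mul_one, normSq_def']
    simp only [expQ, re_add, re_coe, re_smul, smul_eq_mul, imI_add, imI_coe, imI_smul, zero_add,
      imJ_add, imJ_coe, imJ_smul, imK_add, imK_coe, imK_smul]
    simp [qk]

theorem binary_dihedral_cross_section_general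
    (p q r s : ℤ) (hq : Odd q) (hr : Odd r) (hs : Even s)
    (e₁ e₂ : ℤ) (he₁ : 2 * e₁ = p + s + q - r - 1) (he₂ : 2 * e₂ = s - r - 1)
    (γ : ℝ) (M N : ℍ[ℝ])
    (hM : M = (-1 : ℍ[ℝ]) ^ e₁ * qi)
    (hN : N = (-1 : ℍ[ℝ]) ^ e₂ * (expQ γ qk * qi)) :
    M ^ (s + p) * N ^ (q - r) = qi ∧ N ^ (-r) * M ^ s = expQ γ qk * qi := by
  have hM₂ : M ^ 2 = -1 := by rw [hM, neg_one_zpow_mul_sq, qi_sq]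
  have hN₂ : N ^ 2 = -1 := by rw [hN, neg_one_zpow_mul_sq, expQ_qk_mul_qi_sq]
  constructor
  · rw [zpow_mul_zpow_of_sq_eq_neg_one hM₂ hN₂ (hq.sub_odd hr) (e := e₁) (by omega), hM,
      neg_one_zpow_mul_neg_one_zpow_mul]
  · rw [zpow_mul_zpow_of_sq_eq_neg_one hN₂ hM₂ hs (e := e₂) (by omega), hN,
      neg_one_zpow_mul_neg_one_zpow_mul]

/-- The explicit binary dihedral cross section of `V_{p,q,r,s} → I` in the case `p, q, r`
odd and `s` even: with `M = (−1)^{(p+s+q−r−1)/2} i` and `N = (−1)^{(s−r−1)/2} e^{γk} i`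
one has `M^{s+p}N^{q−r} = i` and `N^{−r}M^{s} = e^{γk}i`. -/
theorem binary_dihedral_cross_section
    (p q r s : ℤ) (hp : Odd p) (hq : Odd q) (hr : Odd r) (hs : Even s)
    (hpqrs : p * r + q * s = 1)
    (e₁ e₂ : ℤ) (he₁ : 2 * e₁ = p + s + q - r - 1) (he₂ : 2 * e₂ = s - r - 1)
    (γ : ℝ) (M N : ℍ[ℝ])
    (hM : M = (-1 : ℍ[ℝ]) ^ e₁ * qi)
    (hN : N = (-1 : ℍ[ℝ]) ^ e₂ * (expQ γ qk * qi)) :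
    M ^ (s + p) * N ^ (q - r) = qi ∧ N ^ (-r) * M ^ s = expQ γ qk * qi :=
  binary_dihedral_cross_section_general p q r s hq hr hs e₁ e₂ he₁ he₂ γ M N hM hN
end
end

section
/- Let p, q, r, s be integers. For n : ℤ let T_n be the ℤ-indexed Chebyshev polynomial of the first kind over ℝ (so cos(n·u) = T_n(cos u)) and set S_n := U_{n−1}, where U is the ℤ-indexed Chebyshev polynomial of the second kind (so sin(n·u) = sin(u) · S_n(cos u)). Suppose Q and R are pure unit quaternions and u, v : ℝ satisfy Re(e^{(s+p)u·Q} · e^{(q−r)v·R}) = 0 and Re(e^{−r v·R} · e^{s u·Q}) = 0. Then, at x = cos u and y = cos v: T_{s+p}(x)·T_{q−r}(y)·S_{s}(x)·S_{−r}(y) − S_{s+p}(x)·S_{q−r}(y)·T_{s}(x)·T_{−r}(y) = 0. (Thus the image of the traceless character variety V_{p,q,r,s} of the torus-knot tangle under (e^{uQ}, e^{vR}) ↦ (cos u, cos v) lies in the zero set of the polynomial p_{p,q,r,s}.) -/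
open Quaternion

noncomputable section

/-- Evaluation of the `ℤ`-indexed Chebyshev polynomial of the first kind, so that
`cos (n·u) = chebT n (cos u)`. -/
def chebT (n : ℤ) (x : ℝ) : ℝ := (Polynomial.Chebyshev.T ℝ n).eval x

/-- `S_n := U_{n−1}` evaluated at a real, so that `sin (n·u) = sin u · chebS n (cos u)`. -/
def chebS (n : ℤ) (x : ℝ) : ℝ := (Polynomial.Chebyshev.U ℝ (n - 1)).eval x

lemma chebT_cos (n : ℤ) (θ : ℝ) : chebT n (Real.cos θ) = Real.cos (n * θ) :=
  Polynomial.Chebyshev.T_real_cos θ n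

lemma chebS_sin (n : ℤ) (θ : ℝ) : Real.sin θ * chebS n (Real.cos θ) = Real.sin (n * θ) := by
  have := Polynomial.Chebyshev.U_real_cos θ (n - 1)
  rw [chebS, mul_comm, this]
  push_cast
  ring_nf

lemma expQ_mul_re (a b : ℝ) (Q R : ℍ[ℝ]) (hQ : Q.re = 0) (hR : R.re = 0) :
    (expQ a Q * expQ b R).re
      = Real.cos a * Real.cos b + Real.sin a * Real.sin b * (Q * R).re := by
  simp [expQ, Quaternion.re_mul, Quaternion.re_smul, hQ, hR]
  ring

/-- The image of the traceless character variety `V_{p,q,r,s}` of the torus-knot tangle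
under `(e^{uQ}, e^{vR}) ↦ (cos u, cos v)` lies in the zero set of the polynomial
`p_{p,q,r,s}(x,y) = T_{s+p}(x)T_{q−r}(y)S_{s}(x)S_{−r}(y) −
S_{s+p}(x)S_{q−r}(y)T_{s}(x)T_{−r}(y)`. -/
theorem torus_tangle_chebyshev_polynomial (p q r s : ℤ)
    (Q R : ℍ[ℝ]) (hQnorm : ‖Q‖ = 1) (hQre : Q.re = 0)
    (hRnorm : ‖R‖ = 1) (hRre : R.re = 0)
    (u v : ℝ)
    (h1 : (expQ (((s + p : ℤ) : ℝ) * u) Q * expQ (((q - r : ℤ) : ℝ) * v) R).re = 0)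
    (h2 : (expQ ((-(r : ℤ) : ℝ) * v) R * expQ (((s : ℤ) : ℝ) * u) Q).re = 0) :
    chebT (s + p) (Real.cos u) * chebT (q - r) (Real.cos v)
        * chebS s (Real.cos u) * chebS (-r) (Real.cos v)
      - chebS (s + p) (Real.cos u) * chebS (q - r) (Real.cos v)
        * chebT s (Real.cos u) * chebT (-r) (Real.cos v) = 0 := by
  rw [expQ_mul_re _ _ _ _ hQre hRre] at h1
  rw [expQ_mul_re _ _ _ _ hRre hQre] at h2
  have hsym : (R * Q).re = (Q * R).re := by
    simp [Quaternion.re_mul]; ring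
  rw [hsym] at h2
  set c := (Q * R).re
  rw [← chebT_cos, ← chebT_cos, ← chebS_sin, ← chebS_sin] at h1
  rw [show (-(r:ℝ)) = ((-r : ℤ) : ℝ) by push_cast; ring] at h2
  rw [← chebT_cos, ← chebT_cos, ← chebS_sin, ← chebS_sin] at h2
  linear_combination (chebS s (Real.cos u) * chebS (-r) (Real.cos v)) * h1
    - (chebS (s + p) (Real.cos u) * chebS (q - r) (Real.cos v)) * h2
end
end

section
/- For n : ℤ let T_n be the ℤ-indexed Chebyshev polynomial of the first kind over ℝ and set S_n := U_{n−1}, where U is the ℤ-indexed Chebyshev polynomial of the second kind. For integers p, q, r, s define p_{p,q,r,s}(x,y) := T_{s+p}(x)·T_{q−r}(y)·S_{s}(x)·S_{−r}(y) − S_{s+p}(x)·S_{q−r}(y)·T_{s}(x)·T_{−r}(y). Then for every integer n ≥ 1 and all real x, y: p_{2, 2n+1, n+1, −1}(x, y) = x; explicitly, T_1(x)·T_n(y)·S_{−1}(x)·S_{−(n+1)}(y) − S_1(x)·S_n(y)·T_{−1}(x)·T_{n+1}(y) = x. (This is the computation showing that for the (2, 2n+1) torus knots the curve V_{2,2n+1,n+1,−1}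 is the arc x = 0.) -/
/-!
Writing `x = cos u`, `y = cos v`, the identity is
`x · (cos(nv) sin((n+1)v) − sin(nv) cos((n+1)v)) / sin v = x · sin v / sin v = x`.
Polynomially: `S` is odd and `S_1 = 1`, `T` is even and `T_1 = X`, which reduces the claim to
`x` times the Casoratian `T_n U_n − U_{n−1} T_{n+1}` of the two Chebyshev sequences. Both satisfy
the recurrence `a_{m+2} = 2X a_{m+1} − a_m`, so the Casoratian does not depend on `n`, and at
`n = 0` it is `1`.
-/

noncomputable section

namespace Polynomial.Chebyshev

variable (R : Type*) [CommRing R]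

theorem T_mul_U_sub_U_mul_T (n : ℤ) : T R n * U R n - U R (n - 1) * T R (n + 1) = 1 := by
  induction n using Int.induction_on with
  | zero => simp
  | succ k ih =>
    linear_combination (norm := ring_nf) ih + T R (k + 1) * U_add_one R k - U R k * T_add_two R k
  | pred k ih =>
    linear_combination (norm := ring_nf)
      ih + U R (-k - 1) * T_sub_one R (-k) - T R (-k) * U_sub_one R (-k - 1)

end Polynomial.Chebyshev

open Polynomial Polynomial.Chebyshev

theorem chebT_one (x : ℝ) : chebT 1 x = x := by
  simp [chebT]

theorem chebT_neg (n : ℤ) (x : ℝ) : chebT (-n) x = chebT n x := by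
  simp [chebT, T_neg]

theorem chebS_one (x : ℝ) : chebS 1 x = 1 := by
  simp [chebS]

theorem chebS_neg (n : ℤ) (x : ℝ) : chebS (-n) x = -chebS n x := by
  simp [chebS, U_neg_sub_one]

theorem chebT_mul_chebS_add_one_sub_chebS_mul_chebT (n : ℤ) (x : ℝ) :
    chebT n x * chebS (n + 1) x - chebS n x * chebT (n + 1) x = 1 := by
  simpa [chebT, chebS] using congrArg (eval x) (T_mul_U_sub_U_mul_T ℝ n)

/-- For the `(2, 2n+1)` torus knots the defining polynomial of the curve
`V_{2,2n+1,n+1,−1}` is `x`: with `p = 2`, `q = 2n+1`, `r = n+1`, `s = −1`,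
`p_{p,q,r,s}(x,y) = T_1(x)T_n(y)S_{−1}(x)S_{−(n+1)}(y) − S_1(x)S_n(y)T_{−1}(x)T_{n+1}(y)
= x`. -/
theorem two_strand_torus_knot_polynomial :
    ∀ n : ℤ, 1 ≤ n → ∀ x y : ℝ,
      chebT 1 x * chebT n y * chebS (-1) x * chebS (-(n + 1)) y
        - chebS 1 x * chebS n y * chebT (-1) x * chebT (n + 1) y = x := by
  intro n _ x y
  simp only [chebS_neg, chebT_neg, chebT_one, chebS_one]
  linear_combination x * chebT_mul_chebS_add_one_sub_chebS_mul_chebT n y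
end
end
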